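/- Let K ⊆ ℝᵈ be a closed convex set with nonempty interior and let φ = I_K be its indicator function. Then for x ∈ K and z ∈ ℝᵈ: ∂φ_*(x; z) = 0 if x ∈ Int(K), and also if x lies on the boundary of K and inf_{n ∈ N(x)} ⟨n, z⟩ > 0; whereas ∂φ_*(x; z) = −∞ if x lies on the boundary of K and inf_{n ∈ N(x)} ⟨n, z⟩ ≤ 0. -/

import Mathlib

open scoped RealInnerProductSpace

open Classical in
/-- The indicator function of a set `K ⊆ ℝᵈ`, with values in `(−∞, +∞]`. -/
noncomputable def indicatorFn {d : ℕ} (K : Set (EuclideanSpace ℝ (Fin d))) :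
    EuclideanSpace ℝ (Fin d) → EReal :=
  fun w => if w ∈ K then (0 : EReal) else ⊤

/-- The subdifferential of an extended-real-valued function ψ at x. -/
def subdiff {d : ℕ} (ψ : EuclideanSpace ℝ (Fin d) → EReal)
    (x : EuclideanSpace ℝ (Fin d)) : Set (EuclideanSpace ℝ (Fin d)) :=
  {y | ∀ z, ((⟪y, z - x⟫ : ℝ) : EReal) + ψ x ≤ ψ z}

/-- ∂φ_*(x; z): the liminf of ⟨x*, z'⟩ over triples (x', z', x*) with x* ∈ ∂φ(x'),
as (x', z') → (x, z). -/
noncomputable def subdiffLiminf {d : ℕ} (φ : EuclideanSpace ℝ (Fin d) → EReal)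
    (x z : EuclideanSpace ℝ (Fin d)) : EReal :=
  Filter.liminf
    (fun p : EuclideanSpace ℝ (Fin d) × EuclideanSpace ℝ (Fin d) =>
      ⨅ y ∈ subdiff φ p.1, ((⟪y, p.2⟫ : ℝ) : EReal))
    (nhds (x, z))

/-- The set of exterior unit normals to the closed convex set K at x. -/
def extNormalsSet {d : ℕ} (K : Set (EuclideanSpace ℝ (Fin d)))
    (x : EuclideanSpace ℝ (Fin d)) : Set (EuclideanSpace ℝ (Fin d)) :=
  {n | ‖n‖ = 1 ∧ ∀ w ∈ K, (⟪n, w - x⟫ : ℝ) ≤ 0}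

/-!
For `x' ∈ K` the subdifferential of `I_K` at `x'` is the normal cone of `K` at `x'` (off `K` it
is empty), so `inf_{y ∈ ∂φ(x')} ⟨y, z'⟩` is `0` when every unit normal at `x'` pairs
nonnegatively with `z'`, and `−∞` otherwise because the cone is closed under positive scaling.

If every unit normal at `x` pairs positively with `z`, this persists near `(x, z)`: the pairs
`(x', n)` with `n` a unit normal at `x'` form a closed set, and the tube lemma over the compact
unit sphere turns the pointwise statement into a neighbourhood statement. Hence the liminf is
`0`; in the interior there are no normals at all. Otherwise there are unit normals `n` at `x`
with `⟨n, z⟩ < ε`, and moving `z` to `z − 2ε n` makes the pairing negative, so `−∞` is attained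
arbitrarily close to `(x, z)`.
-/

open Filter Topology Set

theorem iInf_inner_eq_bot_of_ray_subset {E : Type*} [NormedAddCommGroup E]
    [InnerProductSpace ℝ E] {S : Set E} {y z : E} (hS : ∀ t : ℝ, 0 ≤ t → t • y ∈ S)
    (hyz : ⟪y, z⟫ < 0) : ⨅ v ∈ S, ((⟪v, z⟫ : ℝ) : EReal) = ⊥ := by
  refine (EReal.eq_bot_iff_forall_lt _).2 fun r => ?_
  have ht : 0 ≤ (|r| + 1) / -⟪y, z⟫ := div_nonneg (by positivity) (by linarith)
  have htyz : ⟪((|r| + 1) / -⟪y, z⟫) • y, z⟫ = -(|r| + 1) := by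
    rw [real_inner_smul_left, div_mul_eq_mul_div, div_eq_iff (by linarith)]
    ring
  calc ⨅ v ∈ S, ((⟪v, z⟫ : ℝ) : EReal)
      ≤ ((⟪((|r| + 1) / -⟪y, z⟫) • y, z⟫ : ℝ) : EReal) := iInf₂_le _ (hS _ ht)
    _ < r := by
      rw [htyz]
      exact_mod_cast (by linarith [neg_abs_le r] : -(|r| + 1) < r)

section Indicator

variable {d : ℕ} {K : Set (EuclideanSpace ℝ (Fin d))} {x y z n : EuclideanSpace ℝ (Fin d)}

noncomputable def subdiffInf (φ : EuclideanSpace ℝ (Fin d) → EReal)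
    (x z : EuclideanSpace ℝ (Fin d)) : EReal :=
  ⨅ y ∈ subdiff φ x, ((⟪y, z⟫ : ℝ) : EReal)

theorem subdiffLiminf_eq_liminf_subdiffInf (φ : EuclideanSpace ℝ (Fin d) → EReal) :
    subdiffLiminf φ x z = liminf (fun p => subdiffInf φ p.1 p.2) (𝓝 (x, z)) :=
  rfl

theorem mem_subdiff_indicatorFn_iff (hx : x ∈ K) :
    y ∈ subdiff (indicatorFn K) x ↔ ∀ w ∈ K, ⟪y, w - x⟫ ≤ 0 := by
  simp only [subdiff, indicatorFn, mem_ofPred_eq, if_pos hx, add_zero]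
  refine ⟨fun h w hw => by simpa [hw] using h w, fun h w => ?_⟩
  by_cases hw : w ∈ K
  · simpa [hw] using h w hw
  · simp [hw]

theorem mem_of_mem_subdiff_indicatorFn (hK : K.Nonempty) (hy : y ∈ subdiff (indicatorFn K) x) :
    x ∈ K := by
  by_contra hx
  obtain ⟨w, hw⟩ := hK
  simpa [indicatorFn, hx, hw] using hy w

theorem smul_mem_subdiff_indicatorFn (hx : x ∈ K) (hy : y ∈ subdiff (indicatorFn K) x)
    {t : ℝ} (ht : 0 ≤ t) : t • y ∈ subdiff (indicatorFn K) x := by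
  rw [mem_subdiff_indicatorFn_iff hx] at hy ⊢
  intro w hw
  rw [real_inner_smul_left]
  exact mul_nonpos_of_nonneg_of_nonpos ht (hy w hw)

theorem zero_mem_subdiff_indicatorFn (hx : x ∈ K) : 0 ∈ subdiff (indicatorFn K) x :=
  (mem_subdiff_indicatorFn_iff hx).2 fun w _ => by simp

theorem inv_norm_smul_mem_extNormalsSet (hx : x ∈ K) (hy : y ∈ subdiff (indicatorFn K) x)
    (hy0 : y ≠ 0) : ‖y‖⁻¹ • y ∈ extNormalsSet K x :=
  ⟨norm_smul_inv_norm hy0,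
    (mem_subdiff_indicatorFn_iff hx).1 (smul_mem_subdiff_indicatorFn hx hy (by positivity))⟩

theorem extNormalsSet_eq_empty_of_mem_interior (hx : x ∈ interior K) :
    extNormalsSet K x = ∅ := by
  refine eq_empty_of_forall_notMem fun n ⟨hn1, hn⟩ => ?_
  obtain ⟨ε, hε, hball⟩ := Metric.isOpen_iff.1 isOpen_interior x hx
  have hmem : x + (ε / 2) • n ∈ K := interior_subset <| hball <| by
    rw [Metric.mem_ball, dist_eq_norm, add_sub_cancel_left, norm_smul, hn1, Real.norm_eq_abs,
      abs_of_pos (by positivity)]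
    linarith
  have := hn _ hmem
  rw [add_sub_cancel_left, real_inner_smul_right, real_inner_self_eq_norm_sq, hn1] at this
  linarith

theorem isClosed_setOf_mem_extNormalsSet :
    IsClosed {p : EuclideanSpace ℝ (Fin d) × EuclideanSpace ℝ (Fin d) |
      p.2 ∈ extNormalsSet K p.1} := by
  have hset : {p : EuclideanSpace ℝ (Fin d) × EuclideanSpace ℝ (Fin d) |
      p.2 ∈ extNormalsSet K p.1} =
      {p | ‖p.2‖ = 1} ∩ ⋂ w ∈ K, {p | ⟪p.2, w - p.1⟫ ≤ 0} := by
    ext p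
    simp [extNormalsSet]
  rw [hset]
  exact (isClosed_eq (by fun_prop) continuous_const).inter <|
    isClosed_biInter fun w _ => isClosed_le (by fun_prop) continuous_const

/-- Upper semicontinuity of the unit normals. -/
theorem eventually_forall_extNormalsSet_inner_pos (h : ∀ n ∈ extNormalsSet K x, 0 < ⟪n, z⟫) :
    ∀ᶠ p in 𝓝 (x, z), ∀ n ∈ extNormalsSet K p.1, 0 < ⟪n, p.2⟫ := by
  have hopen : IsOpen {q : (EuclideanSpace ℝ (Fin d) × EuclideanSpace ℝ (Fin d)) ×
      EuclideanSpace ℝ (Fin d) | q.2 ∈ extNormalsSet K q.1.1 → 0 < ⟪q.2, q.1.2⟫} := by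
    simp only [imp_iff_not_or, ofPred_or]
    exact (isClosed_setOf_mem_extNormalsSet.preimage
      (continuous_fst.fst.prodMk continuous_snd)).isOpen_compl.union
      (isOpen_lt continuous_const (continuous_snd.inner continuous_fst.snd))
  have htube : ∀ᶠ p in 𝓝 (x, z), ∀ n ∈ Metric.sphere 0 1,
      n ∈ extNormalsSet K p.1 → 0 < ⟪n, p.2⟫ :=
    (isCompact_sphere _ _).eventually_forall_of_forall_eventually fun n _ => hopen.mem_nhds (h n)
  filter_upwards [htube] with p hp n hn
  exact hp n (mem_sphere_zero_iff_norm.2 hn.1) hn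

theorem subdiffInf_indicatorFn_nonneg (hK : K.Nonempty)
    (h : ∀ n ∈ extNormalsSet K x, 0 ≤ ⟪n, z⟫) : 0 ≤ subdiffInf (indicatorFn K) x z := by
  refine le_iInf₂ fun y hy => EReal.coe_nonneg.2 ?_
  rcases eq_or_ne y 0 with rfl | hy0
  · simp
  · have hx := mem_of_mem_subdiff_indicatorFn hK hy
    have hyz := h _ (inv_norm_smul_mem_extNormalsSet hx hy hy0)
    rw [real_inner_smul_left] at hyz
    exact (mul_nonneg_iff_of_pos_left (by positivity)).1 hyz

theorem subdiffInf_indicatorFn_nonpos (hx : x ∈ K) : subdiffInf (indicatorFn K) x z ≤ 0 :=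
  (iInf₂_le 0 (zero_mem_subdiff_indicatorFn hx)).trans (by simp)

theorem subdiffInf_indicatorFn_eq_bot (hx : x ∈ K) (hn : n ∈ extNormalsSet K x)
    (hnz : ⟪n, z⟫ < 0) : subdiffInf (indicatorFn K) x z = ⊥ :=
  iInf_inner_eq_bot_of_ray_subset (fun _ ht => smul_mem_subdiff_indicatorFn hx
    ((mem_subdiff_indicatorFn_iff hx).2 hn.2) ht) hnz

theorem subdiffLiminf_indicatorFn_eq_zero (hx : x ∈ K)
    (h : ∀ n ∈ extNormalsSet K x, 0 < ⟪n, z⟫) : subdiffLiminf (indicatorFn K) x z = 0 := by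
  rw [subdiffLiminf_eq_liminf_subdiffInf]
  refine le_antisymm ?_ ?_
  · have hxz : ∃ᶠ p in pure (x, z), subdiffInf (indicatorFn K) p.1 p.2 ≤ 0 :=
      frequently_pure.2 (subdiffInf_indicatorFn_nonpos hx)
    exact liminf_le_of_frequently_le (hxz.filter_mono (pure_le_nhds _))
  · exact le_liminf_of_le (by isBoundedDefault) <|
      (eventually_forall_extNormalsSet_inner_pos h).mono fun p hp =>
        subdiffInf_indicatorFn_nonneg ⟨x, hx⟩ fun n hn => (hp n hn).le

theorem subdiffLiminf_indicatorFn_eq_bot (hx : x ∈ K)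
    (h : ∀ c > 0, ∃ n ∈ extNormalsSet K x, ⟪n, z⟫ < c) :
    subdiffLiminf (indicatorFn K) x z = ⊥ := by
  rw [subdiffLiminf_eq_liminf_subdiffInf]
  refine le_bot_iff.1 (liminf_le_of_frequently_le (Metric.nhds_basis_ball.frequently_iff.2
    fun ε hε => ?_))
  obtain ⟨n, hn, hnz⟩ := h (ε / 4) (by positivity)
  refine ⟨(x, z - (ε / 2) • n), ?_, (subdiffInf_indicatorFn_eq_bot hx hn ?_).le⟩
  · rw [Metric.mem_ball, Prod.dist_eq, dist_self, dist_eq_norm, sub_sub_cancel_left, norm_neg,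
      norm_smul, hn.1, Real.norm_eq_abs, abs_of_pos (by positivity), mul_one,
      max_eq_right (by positivity)]
    linarith
  · rw [inner_sub_right, real_inner_smul_right, real_inner_self_eq_norm_sq, hn.1]
    linarith

end Indicator

theorem subdiffLiminf_indicator_general {d : ℕ}
    (K : Set (EuclideanSpace ℝ (Fin d)))
    (x : EuclideanSpace ℝ (Fin d)) (hx : x ∈ K)
    (z : EuclideanSpace ℝ (Fin d)) :
    (x ∈ interior K → subdiffLiminf (indicatorFn K) x z = 0) ∧
    (x ∈ frontier K →
      (∃ c > (0 : ℝ), ∀ n ∈ extNormalsSet K x, c ≤ (⟪n, z⟫ : ℝ)) →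
      subdiffLiminf (indicatorFn K) x z = 0) ∧
    (x ∈ frontier K →
      ¬(∃ c > (0 : ℝ), ∀ n ∈ extNormalsSet K x, c ≤ (⟪n, z⟫ : ℝ)) →
      subdiffLiminf (indicatorFn K) x z = ⊥) := by
  refine ⟨fun hxi => ?_, fun _ ⟨c, hc, hcz⟩ => ?_, fun _ hneg => ?_⟩
  · exact subdiffLiminf_indicatorFn_eq_zero hx
      (by simp [extNormalsSet_eq_empty_of_mem_interior hxi])
  · exact subdiffLiminf_indicatorFn_eq_zero hx fun n hn => hc.trans_le (hcz n hn)
  · push Not at hneg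
    exact subdiffLiminf_indicatorFn_eq_bot hx hneg

/-- Let K ⊆ ℝᵈ be a closed convex set with nonempty interior and let
φ = I_K be its indicator function.  For x ∈ K and z ∈ ℝᵈ: ∂φ_*(x; z) = 0 if
x ∈ Int(K), and also if x ∈ Bd(K) with inf_{n ∈ N(x)} ⟨n, z⟩ > 0; whereas
∂φ_*(x; z) = −∞ if x ∈ Bd(K) with inf_{n ∈ N(x)} ⟨n, z⟩ ≤ 0. -/
theorem subdiffLiminf_indicator {d : ℕ} (hd : 0 < d)
    (K : Set (EuclideanSpace ℝ (Fin d)))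
    (hcl : IsClosed K) (hconv : Convex ℝ K) (hint : (interior K).Nonempty)
    (x : EuclideanSpace ℝ (Fin d)) (hx : x ∈ K)
    (z : EuclideanSpace ℝ (Fin d)) :
    (x ∈ interior K → subdiffLiminf (indicatorFn K) x z = 0) ∧
    (x ∈ frontier K →
      (∃ c > (0 : ℝ), ∀ n ∈ extNormalsSet K x, c ≤ (⟪n, z⟫ : ℝ)) →
      subdiffLiminf (indicatorFn K) x z = 0) ∧
    (x ∈ frontier K →
      ¬(∃ c > (0 : ℝ), ∀ n ∈ extNormalsSet K x, c ≤ (⟪n, z⟫ : ℝ)) →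
      subdiffLiminf (indicatorFn K) x z = ⊥) :=
  subdiffLiminf_indicator_general K x hx z
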